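/- arXiv:2007.04036 — 6 statements merged into one kernel-verified Lean document; each statement's English description precedes it below -/
import Mathlib

section
/- With the Paillier setup, for every natural number m and every unit r of ZMod (N²), the ciphertext c = Γ^m · r^N (a unit of ZMod (N²)) decrypts correctly: D(c) = L(c^λ)·μ equals the image of m in ZMod N. -/
/-!
The Carmichael exponent of `(ZMod (N ^ 2))ˣ` divides `lcm (p (p - 1)) (q (q - 1))`, hence `N λ`,
so `r ^ N` is killed by `λ` and `c ^ λ = (Γ ^ λ) ^ m`. Likewise `Γ ^ λ ≡ 1 [MOD N]`, say
`Γ ^ λ = 1 + N a`; since `(N a) ^ 2 = 0` in `ZMod (N ^ 2)`, `(1 + N a) ^ m = 1 + N (m a)`.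
Hence `L (c ^ λ) = m a = m L (Γ ^ λ)`, and multiplying by `μ` leaves `m`.
-/

/-- The Paillier `L` function: for a unit `w` of `ZMod (N^2)`,
`L(w) = (w.val - 1) / N`, viewed as an element of `ZMod N`. -/
def paillierL (N : ℕ) (w : (ZMod (N ^ 2))ˣ) : ZMod N :=
  ((((w : ZMod (N ^ 2)).val - 1) / N : ℕ) : ZMod N)

/-- Paillier decryption: `D(c) = L(c^λ) · μ`. -/
def paillierD (N lam : ℕ) (μ : ZMod N) (c : (ZMod (N ^ 2))ˣ) : ZMod N :=
  paillierL N (c ^ lam) * μ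

open ArithmeticFunction

lemma carmichael_mul_dvd_of_totient_dvd {a b k : ℕ} (hab : a.Coprime b)
    (ha : a.totient ∣ k) (hb : b.totient ∣ k) : carmichael (a * b) ∣ k := by
  rw [carmichael_mul hab]
  exact Nat.lcm_dvd ((carmichael_dvd_totient a).trans ha) ((carmichael_dvd_totient b).trans hb)

lemma ZMod.pow_eq_one_of_carmichael_dvd {n k : ℕ} (u : (ZMod n)ˣ) (h : carmichael n ∣ k) :
    u ^ k = 1 := by
  obtain ⟨t, rfl⟩ := h
  rw [pow_mul, pow_carmichael, one_pow]

lemma carmichael_mul_dvd_lcm_sub_one {p q : ℕ} (hp : p.Prime) (hq : q.Prime) (hpq : p ≠ q) :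
    carmichael (p * q) ∣ Nat.lcm (p - 1) (q - 1) :=
  carmichael_mul_dvd_of_totient_dvd ((Nat.coprime_primes hp hq).mpr hpq)
    (by rw [Nat.totient_prime hp]; exact Nat.dvd_lcm_left _ _)
    (by rw [Nat.totient_prime hq]; exact Nat.dvd_lcm_right _ _)

lemma carmichael_mul_sq_dvd_mul_lcm_sub_one {p q : ℕ} (hp : p.Prime) (hq : q.Prime)
    (hpq : p ≠ q) :
    carmichael ((p * q) ^ 2) ∣ p * q * Nat.lcm (p - 1) (q - 1) := by
  rw [mul_pow]
  refine carmichael_mul_dvd_of_totient_dvd (((Nat.coprime_primes hp hq).mpr hpq).pow 2 2) ?_ ?_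
  · rw [Nat.totient_prime_pow_succ hp, pow_one]
    exact mul_dvd_mul (dvd_mul_right p q) (Nat.dvd_lcm_left _ _)
  · rw [Nat.totient_prime_pow_succ hq, pow_one]
    exact mul_dvd_mul (dvd_mul_left q p) (Nat.dvd_lcm_right _ _)

lemma one_add_pow_of_sq_eq_zero {R : Type*} [CommRing R] {ε : R} (hε : ε ^ 2 = 0) (m : ℕ) :
    (1 + ε) ^ m = 1 + m * ε := by
  induction m with
  | zero => simp
  | succ m ih =>
    rw [pow_succ, ih]
    push_cast
    linear_combination (m : R) * hε

lemma ZMod.exists_eq_one_add_mul_of_castHom_eq_one {N : ℕ} [NeZero N] {x : ZMod (N ^ 2)}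
    (hx : ZMod.castHom (dvd_pow_self N two_ne_zero) (ZMod N) x = 1) :
    ∃ a : ℕ, x = 1 + N * a := by
  have hN : N ∣ (x - 1).val := by
    rw [← ZMod.natCast_eq_zero_iff, ZMod.natCast_val,
      ← ZMod.castHom_apply (h := dvd_pow_self N two_ne_zero), map_sub, hx, map_one, sub_self]
  obtain ⟨a, ha⟩ := hN
  refine ⟨a, ?_⟩
  rw [← Nat.cast_mul, ← ha, ZMod.natCast_zmod_val, add_sub_cancel]

lemma paillierL_eq_of_coe_eq_one_add_mul {N : ℕ} [NeZero N] {w : (ZMod (N ^ 2))ˣ} {a : ℕ}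
    (hw : (w : ZMod (N ^ 2)) = 1 + N * a) : paillierL N w = a := by
  rcases (Nat.one_le_iff_ne_zero.mpr (NeZero.ne N)).eq_or_lt with rfl | hN
  · exact Subsingleton.elim _ _
  have hval : (w : ZMod (N ^ 2)).val = 1 + N * (a % N) := by
    rw [hw, ← Nat.cast_one, ← Nat.cast_mul, ← Nat.cast_add, ZMod.val_natCast, sq, Nat.mod_mul,
      Nat.add_mul_mod_self_left, Nat.mod_eq_of_lt hN, Nat.add_mul_div_left _ _ (by omega),
      Nat.div_eq_of_lt hN, zero_add]
  rw [paillierL, hval, Nat.add_sub_cancel_left, Nat.mul_div_cancel_left _ (by omega),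
    ZMod.natCast_mod]

theorem paillier_decrypt_correct_general
    (p q : ℕ) (hp : p.Prime) (hq : q.Prime) (hpq : p ≠ q)
    (N : ℕ) (hN : N = p * q)
    (lam : ℕ) (hlam : lam = Nat.lcm (p - 1) (q - 1))
    (Γ : (ZMod (N ^ 2))ˣ) (μ : ZMod N)
    (hμ : paillierL N (Γ ^ lam) * μ = 1)
    (m : ℕ) (r : (ZMod (N ^ 2))ˣ) :
    paillierD N lam μ (Γ ^ m * r ^ N) = (m : ZMod N) := by
  have : NeZero N := ⟨hN ▸ mul_ne_zero hp.ne_zero hq.ne_zero⟩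
  have hc : (Γ ^ m * r ^ N) ^ lam = (Γ ^ lam) ^ m := by
    have hr : r ^ (N * lam) = 1 := ZMod.pow_eq_one_of_carmichael_dvd r
      (hN ▸ hlam ▸ carmichael_mul_sq_dvd_mul_lcm_sub_one hp hq hpq)
    rw [mul_pow, ← pow_mul r, hr, mul_one, ← pow_mul, ← pow_mul, mul_comm]
  have hΓ : ZMod.castHom (dvd_pow_self N two_ne_zero) (ZMod N) ↑(Γ ^ lam) = 1 := by
    have hcar : carmichael N ∣ lam := hN ▸ hlam ▸ carmichael_mul_dvd_lcm_sub_one hp hq hpq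
    rw [ZMod.castHom_apply, ← ZMod.unitsMap_val (dvd_pow_self N two_ne_zero), map_pow,
      ZMod.pow_eq_one_of_carmichael_dvd _ hcar, Units.val_one]
  obtain ⟨a, ha⟩ := ZMod.exists_eq_one_add_mul_of_castHom_eq_one hΓ
  have hpow : (((Γ ^ lam) ^ m : (ZMod (N ^ 2))ˣ) : ZMod (N ^ 2)) = 1 + N * (m * a : ℕ) := by
    have hsq : ((N : ZMod (N ^ 2)) * a) ^ 2 = 0 := by
      rw [mul_pow, ← Nat.cast_pow, ZMod.natCast_self, zero_mul]
    rw [Units.val_pow_eq_pow_val, ha, one_add_pow_of_sq_eq_zero hsq]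
    push_cast
    ring
  rw [paillierD, hc, paillierL_eq_of_coe_eq_one_add_mul hpow, Nat.cast_mul, mul_assoc,
    ← paillierL_eq_of_coe_eq_one_add_mul ha, hμ, mul_one]

theorem paillier_decrypt_correct
    (p q : ℕ) (hp : p.Prime) (hq : q.Prime) (hpq : p ≠ q)
    (N : ℕ) (hN : N = p * q)
    (hco : Nat.Coprime N ((p - 1) * (q - 1)))
    (lam : ℕ) (hlam : lam = Nat.lcm (p - 1) (q - 1))
    (Γ : (ZMod (N ^ 2))ˣ) (μ : ZMod N)
    (hμ : paillierL N (Γ ^ lam) * μ = 1)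
    (m : ℕ) (r : (ZMod (N ^ 2))ˣ) :
    paillierD N lam μ (Γ ^ m * r ^ N) = (m : ZMod N) :=
  paillier_decrypt_correct_general p q hp hq hpq N hN lam hlam Γ μ hμ m r
end

section
/- With the Paillier setup, the share-conversion (MtA) ciphertext is a correct encryption of a·b + β′: for natural numbers a, b, β′ and units r, r′ of ZMod (N²), setting c_A = Γ^a·r^N (Alice's ciphertext) and c_B = c_A^b · (Γ^{β′}·r′^N) (Bob's response), one has D(c_B) = image of a·b + β′ in ZMod N. -/
open ArithmeticFunction (carmichael)

theorem one_add_pow_of_sq_eq_zero_s4 {R : Type*} [CommSemiring R] {a : R} (ha : a ^ 2 = 0)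
    (k : ℕ) : (1 + a) ^ k = 1 + k * a := by
  induction k with
  | zero => simp
  | succ k ih =>
    calc (1 + a) ^ (k + 1) = 1 + (k + 1) * a + k * a ^ 2 := by rw [pow_succ, ih]; ring
      _ = 1 + ((k + 1 : ℕ) : R) * a := by rw [ha]; push_cast; ring

theorem carmichael_mul_dvd_lcm_totient {a b : ℕ} (h : a.Coprime b) :
    carmichael (a * b) ∣ Nat.lcm a.totient b.totient := by
  rw [ArithmeticFunction.carmichael_mul h]
  exact lcm_dvd_lcm (ArithmeticFunction.carmichael_dvd_totient a)
    (ArithmeticFunction.carmichael_dvd_totient b)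

namespace ZMod

variable {n : ℕ}

theorem natCast_sq_eq_zero : (n : ZMod (n ^ 2)) ^ 2 = 0 := by
  rw [← Nat.cast_pow, natCast_self]

theorem val_one_add_mul (hn : 1 < n) (z : ℕ) :
    (1 + n * z : ZMod (n ^ 2)).val = 1 + n * (z % n) := by
  have hlt : 1 + n * (z % n) < n ^ 2 := by
    have := Nat.mod_lt z (by omega : 0 < n)
    nlinarith
  have hsplit : 1 + n * z = 1 + n * (z % n) + n ^ 2 * (z / n) := by
    conv_lhs => rw [← Nat.mod_add_div z n]
    ring
  have hcast : (1 + n * z : ZMod (n ^ 2)) = ((1 + n * z : ℕ) : ZMod (n ^ 2)) := by push_cast; rfl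
  rw [hcast, val_natCast, hsplit, Nat.add_mul_mod_self_left, Nat.mod_eq_of_lt hlt]

theorem exists_eq_one_add_mul_of_cast_eq_one (hn : 1 < n) {w : ZMod (n ^ 2)}
    (hw : (w.cast : ZMod n) = 1) : ∃ z : ℕ, w = 1 + n * z := by
  have : Fact (1 < n) := ⟨hn⟩
  have : NeZero (n ^ 2) := ⟨by positivity⟩
  have hmod : w.val % n = 1 := by
    have h := congrArg val hw
    rwa [cast_eq_val, val_natCast, val_one] at h
  refine ⟨w.val / n, ?_⟩
  calc w = ((w.val : ℕ) : ZMod (n ^ 2)) := (natCast_zmod_val w).symm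
    _ = ((w.val % n + n * (w.val / n) : ℕ) : ZMod (n ^ 2)) := by rw [Nat.mod_add_div]
    _ = 1 + n * (w.val / n : ℕ) := by rw [hmod]; push_cast; rfl

theorem exists_coe_pow_eq_one_add_mul (hn : 1 < n) {k : ℕ} (hk : carmichael n ∣ k)
    (u : (ZMod (n ^ 2))ˣ) : ∃ z : ℕ, ((u ^ k : (ZMod (n ^ 2))ˣ) : ZMod (n ^ 2)) = 1 + n * z := by
  apply exists_eq_one_add_mul_of_cast_eq_one hn
  obtain ⟨c, rfl⟩ := hk
  have h := congrArg Units.val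
    (ArithmeticFunction.pow_carmichael (unitsMap (dvd_pow_self n two_ne_zero) u ^ c))
  rwa [← pow_mul, mul_comm, ← map_pow, unitsMap_val, Units.val_one] at h

theorem one_add_mul_pow (z k : ℕ) : (1 + n * z : ZMod (n ^ 2)) ^ k = 1 + n * (k * z : ℕ) := by
  rw [one_add_pow_of_sq_eq_zero_s4 (by rw [mul_pow, natCast_sq_eq_zero, zero_mul])]
  push_cast
  ring

theorem pow_mul_eq_one_of_carmichael_dvd (hn : 1 < n) {k : ℕ} (hk : carmichael n ∣ k)
    (u : (ZMod (n ^ 2))ˣ) : u ^ (k * n) = 1 := by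
  obtain ⟨z, hz⟩ := exists_coe_pow_eq_one_add_mul hn hk u
  ext
  rw [pow_mul, Units.val_pow_eq_pow_val, hz, one_add_mul_pow, Nat.cast_mul, ← mul_assoc, ← sq,
    natCast_sq_eq_zero, zero_mul, add_zero, Units.val_one]

end ZMod

section

variable {n : ℕ}

open ZMod

theorem paillierL_eq_of_coe_eq_one_add_mul_s4 (hn : 1 < n) {w : (ZMod (n ^ 2))ˣ} {z : ℕ}
    (hw : (w : ZMod (n ^ 2)) = 1 + n * z) : paillierL n w = z := by
  rw [paillierL, hw, val_one_add_mul hn, Nat.add_sub_cancel_left,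
    Nat.mul_div_cancel_left _ (by omega), natCast_mod]

theorem paillierL_pow (hn : 1 < n) {w : (ZMod (n ^ 2))ˣ} {z : ℕ}
    (hw : (w : ZMod (n ^ 2)) = 1 + n * z) (k : ℕ) :
    paillierL n (w ^ k) = k * paillierL n w := by
  rw [paillierL_eq_of_coe_eq_one_add_mul_s4 hn hw, paillierL_eq_of_coe_eq_one_add_mul_s4 hn
    (by rw [Units.val_pow_eq_pow_val, hw, one_add_mul_pow]), Nat.cast_mul]

theorem paillierD_mul_pow_self (hn : 1 < n) {lam : ℕ} (hlam : carmichael n ∣ lam) (μ : ZMod n)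
    (c y : (ZMod (n ^ 2))ˣ) : paillierD n lam μ (c * y ^ n) = paillierD n lam μ c := by
  rw [paillierD, paillierD, mul_pow, ← pow_mul, mul_comm n,
    pow_mul_eq_one_of_carmichael_dvd hn hlam, mul_one]

theorem paillierD_pow (hn : 1 < n) {lam : ℕ} (hlam : carmichael n ∣ lam) {μ : ZMod n}
    {Γ : (ZMod (n ^ 2))ˣ} (hμ : paillierL n (Γ ^ lam) * μ = 1) (m : ℕ) :
    paillierD n lam μ (Γ ^ m) = m := by
  obtain ⟨z, hz⟩ := exists_coe_pow_eq_one_add_mul hn hlam Γ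
  rw [paillierD, ← pow_mul, mul_comm m, pow_mul, paillierL_pow hn hz, mul_assoc, hμ, mul_one]

end

theorem mta_ciphertext_correct_general
    (p q : ℕ) (hp : p.Prime) (hq : q.Prime) (hpq : p ≠ q)
    (N : ℕ) (hN : N = p * q)
    (lam : ℕ) (hlam : lam = Nat.lcm (p - 1) (q - 1))
    (Γ : (ZMod (N ^ 2))ˣ) (μ : ZMod N)
    (hμ : paillierL N (Γ ^ lam) * μ = 1)
    (a b β' : ℕ) (r r' : (ZMod (N ^ 2))ˣ)
    (cA : (ZMod (N ^ 2))ˣ) (hcA : cA = Γ ^ a * r ^ N)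
    (cB : (ZMod (N ^ 2))ˣ) (hcB : cB = cA ^ b * (Γ ^ β' * r' ^ N)) :
    paillierD N lam μ cB = ((a * b + β' : ℕ) : ZMod N) := by
  have hN1 : 1 < N := hN ▸ Nat.one_lt_mul_iff.mpr ⟨hp.pos, hq.pos, Or.inl hp.one_lt⟩
  have hcarm : carmichael N ∣ lam := by
    rw [hN, hlam, ← Nat.totient_prime hp, ← Nat.totient_prime hq]
    exact carmichael_mul_dvd_lcm_totient ((Nat.coprime_primes hp hq).mpr hpq)
  have hcB' : cB = Γ ^ (a * b + β') * (r ^ b * r') ^ N := by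
    rw [hcB, hcA, pow_add, mul_pow, mul_pow, ← pow_mul, ← pow_mul, ← pow_mul, mul_comm N b]
    exact mul_mul_mul_comm _ _ _ _
  rw [hcB', paillierD_mul_pow_self hN1 hcarm, paillierD_pow hN1 hcarm hμ]

theorem mta_ciphertext_correct
    (p q : ℕ) (hp : p.Prime) (hq : q.Prime) (hpq : p ≠ q)
    (N : ℕ) (hN : N = p * q)
    (hco : Nat.Coprime N ((p - 1) * (q - 1)))
    (lam : ℕ) (hlam : lam = Nat.lcm (p - 1) (q - 1))
    (Γ : (ZMod (N ^ 2))ˣ) (μ : ZMod N)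
    (hμ : paillierL N (Γ ^ lam) * μ = 1)
    (a b β' : ℕ) (r r' : (ZMod (N ^ 2))ˣ)
    (cA : (ZMod (N ^ 2))ˣ) (hcA : cA = Γ ^ a * r ^ N)
    (cB : (ZMod (N ^ 2))ˣ) (hcB : cB = cA ^ b * (Γ ^ β' * r' ^ N)) :
    paillierD N lam μ cB = ((a * b + β' : ℕ) : ZMod N) :=
  mta_ciphertext_correct_general p q hp hq hpq N hN lam hlam Γ μ hμ a b β' r r' cA hcA cB hcB
end

section
/- Recovery-signature consistency for players P₁ and P₃: let q be a prime with q > 3 and work in ZMod q. Given u₁, u₂, m₁, m₂, σ₃₁, σ₃₂ ∈ ZMod q, set σ_{i,1} = u_i + 2·m_i and σ_{i,3} = u_i + m_i for i = 1,2, x₁ = σ_{1,1} + σ_{2,1} + σ₃₁, x₃ = σ_{1,3} + 2·σ₃₁ − σ₃₂ + σ_{2,3}, u = u₁ + u₂ + 3·σ₃₁ − 2·σ₃₂, ω₁ = 3·x₁, ω̃₁ = −3⁻¹·ω₁ and ω₃ = 2·x₃. Then ω̃₁ + ω₃ = u. -/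
/-!
All shares lie on the aggregate dealing line `F = f₁ + f₂ + f₃`, where P₃'s own line
`f₃(X) = (3σ₃₁ - 2σ₃₂) + (σ₃₂ - σ₃₁)X` is interpolated from `σ₃₁ = f₃(2)` and `σ₃₂ = f₃(3)`.
Then `x₁ = F(2)`, `x₃ = F(1)` and `u = F(0)`, so the claim is Lagrange interpolation at `0` from the
nodes `1, 2`: `F(0) = 2F(1) - F(2)`. The adjusted key `ω̃₁ = -(1/3)·3x₁` is `-F(2)` since `3` is
invertible in `ZMod q`.
-/

theorem ZMod.natCast_ne_zero_of_pos_of_lt {n q : ℕ} (hn : 0 < n) (hnq : n < q) :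
    (n : ZMod q) ≠ 0 :=
  (ZMod.natCast_eq_zero_iff n q).not.mpr (Nat.not_dvd_of_pos_of_lt hn hnq)

theorem recovery_signature_consistency_P1_P3
    (q : ℕ) [Fact q.Prime] (hq3 : 3 < q)
    (u₁ u₂ m₁ m₂ σ₃₁ σ₃₂ : ZMod q)
    (σ₁₁ σ₂₁ σ₁₃ σ₂₃ : ZMod q)
    (hσ₁₁ : σ₁₁ = u₁ + 2 * m₁) (hσ₂₁ : σ₂₁ = u₂ + 2 * m₂)
    (hσ₁₃ : σ₁₃ = u₁ + m₁) (hσ₂₃ : σ₂₃ = u₂ + m₂)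
    (x₁ x₃ : ZMod q)
    (hx₁ : x₁ = σ₁₁ + σ₂₁ + σ₃₁)
    (hx₃ : x₃ = σ₁₃ + 2 * σ₃₁ - σ₃₂ + σ₂₃)
    (u : ZMod q) (hu : u = u₁ + u₂ + 3 * σ₃₁ - 2 * σ₃₂)
    (ω₁ : ZMod q) (hω₁ : ω₁ = 3 * x₁)
    (ωtilde₁ : ZMod q) (hωtilde₁ : ωtilde₁ = -(3 : ZMod q)⁻¹ * ω₁)
    (ω₃ : ZMod q) (hω₃ : ω₃ = 2 * x₃) :
    ωtilde₁ + ω₃ = u := by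
  have h3 : (3 : ZMod q) ≠ 0 := by
    exact_mod_cast ZMod.natCast_ne_zero_of_pos_of_lt (by norm_num) hq3
  set U := u₁ + u₂ + (3 * σ₃₁ - 2 * σ₃₂)
  set M := m₁ + m₂ + (σ₃₂ - σ₃₁)
  have hx₁_eval : x₁ = U + 2 * M := by rw [hx₁, hσ₁₁, hσ₂₁]; ring
  have hx₃_eval : x₃ = U + M := by rw [hx₃, hσ₁₃, hσ₂₃]; ring
  have hu_eval : u = U := by rw [hu]; ring
  have hωtilde₁_eq : ωtilde₁ = -x₁ := by
    rw [hωtilde₁, hω₁, neg_mul, inv_mul_cancel_left₀ h3]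
  rw [hωtilde₁_eq, hω₃, hx₁_eval, hx₃_eval, hu_eval]
  ring
end

section
/- Recovery-signature consistency for players P₂ and P₃: let q be a prime with q > 3 and work in ZMod q. Given u₁, u₂, m₁, m₂, σ₃₁, σ₃₂ ∈ ZMod q, set σ_{i,2} = u_i + 3·m_i and σ_{i,3} = u_i + m_i for i = 1,2, x₂ = σ_{1,2} + σ_{2,2} + σ₃₂, x₃ = σ_{1,3} + 2·σ₃₁ − σ₃₂ + σ_{2,3}, u = u₁ + u₂ + 3·σ₃₁ − 2·σ₃₂, ω₂ = −2·x₂, ω̃₂ = 4⁻¹·ω₂ and ω₃ = 3·2⁻¹·x₃. Then ω̃₂ + ω₃ = u. -/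
/-! The two weights combine to `(3·x₃ − x₂)/2`. Taking `f₃` to be the degree-one polynomial with
`f₃(2) = σ₃₁` and `f₃(3) = σ₃₂`, the shares `x₃`, `x₂` and the key `u` are the values at `1`, `3` and `0`
of `f = f₁ + f₂ + f₃`, and `3·f(1) − f(3) = 2·f(0)` holds for every polynomial of degree at most one. -/

theorem three_mul_recovered_share_sub_share {R : Type*} [CommRing R]
    (u₁ u₂ m₁ m₂ σ₃₁ σ₃₂ : R) :
    3 * ((u₁ + m₁) + 2 * σ₃₁ - σ₃₂ + (u₂ + m₂)) - ((u₁ + 3 * m₁) + (u₂ + 3 * m₂) + σ₃₂)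
      = 2 * (u₁ + u₂ + 3 * σ₃₁ - 2 * σ₃₂) := by
  ring

theorem ZMod.two_ne_zero_of_two_lt {q : ℕ} (hq : 2 < q) : (2 : ZMod q) ≠ 0 :=
  mod_cast (ZMod.natCast_eq_zero_iff 2 q).not.mpr (Nat.not_dvd_of_pos_of_lt two_pos hq)

theorem inv_four_mul_neg_two_mul_add_three_mul_inv_two_mul {K : Type*} [Field K]
    (h2 : (2 : K) ≠ 0) (a b : K) :
    4⁻¹ * (-2 * a) + 3 * 2⁻¹ * b = 2⁻¹ * (3 * b - a) := by
  rw [show (4 : K) = 2 * 2 by norm_num]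
  field_simp
  ring

theorem recovery_signature_consistency_P2_P3
    (q : ℕ) [Fact q.Prime] (hq3 : 3 < q)
    (u₁ u₂ m₁ m₂ σ₃₁ σ₃₂ : ZMod q)
    (σ₁₂ σ₂₂ σ₁₃ σ₂₃ : ZMod q)
    (hσ₁₂ : σ₁₂ = u₁ + 3 * m₁) (hσ₂₂ : σ₂₂ = u₂ + 3 * m₂)
    (hσ₁₃ : σ₁₃ = u₁ + m₁) (hσ₂₃ : σ₂₃ = u₂ + m₂)
    (x₂ x₃ : ZMod q)
    (hx₂ : x₂ = σ₁₂ + σ₂₂ + σ₃₂)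
    (hx₃ : x₃ = σ₁₃ + 2 * σ₃₁ - σ₃₂ + σ₂₃)
    (u : ZMod q) (hu : u = u₁ + u₂ + 3 * σ₃₁ - 2 * σ₃₂)
    (ω₂ : ZMod q) (hω₂ : ω₂ = -2 * x₂)
    (ωtilde₂ : ZMod q) (hωtilde₂ : ωtilde₂ = (4 : ZMod q)⁻¹ * ω₂)
    (ω₃ : ZMod q) (hω₃ : ω₃ = 3 * (2 : ZMod q)⁻¹ * x₃) :
    ωtilde₂ + ω₃ = u := by
  have h2 : (2 : ZMod q) ≠ 0 := ZMod.two_ne_zero_of_two_lt (by omega)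
  have hweights : ωtilde₂ + ω₃ = 2⁻¹ * (3 * x₃ - x₂) := by
    rw [hωtilde₂, hω₃, hω₂, inv_four_mul_neg_two_mul_add_three_mul_inv_two_mul h2]
  rw [hweights, hx₃, hx₂, hσ₁₂, hσ₂₂, hσ₁₃, hσ₂₃, three_mul_recovered_share_sub_share, hu,
    inv_mul_cancel_left₀ h2]
end

section
/- Completeness of the threshold signature: let q be a prime, G an additive commutative group that is a module over ZMod q, and B : G. Let m, r, k_A, k_B, σ_A, σ_B, u ∈ ZMod q with σ_A + σ_B = (k_A + k_B)·u, set k = k_A + k_B, Y = u•B, s_i = m·k_i + r·σ_i for i ∈ {A,B}, and s = s_A + s_B. Then s = k·(m + r·u); moreover if k ≠ 0 and s ≠ 0 then (m·s⁻¹)•B + (r·s⁻¹)•Y = k⁻¹•B, i.e. (r, s) passes ECDSA verification against the point R = k⁻¹•B. -/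
theorem sum_signature_shards_eq {R : Type*} [CommRing R] {m r kA kB σA σB u : R}
    (hσ : σA + σB = (kA + kB) * u) :
    (m * kA + r * σA) + (m * kB + r * σB) = (kA + kB) * (m + r * u) := by
  linear_combination r * hσ

theorem ecdsa_verify_of_eq_mul {K M : Type*} [Field K] [AddCommGroup M] [Module K M]
    (B : M) {m r u k s : K} (hs : s = k * (m + r * u)) (hs0 : s ≠ 0) :
    (m * s⁻¹) • B + (r * s⁻¹) • (u • B) = k⁻¹ • B := by
  have hmru : m + r * u ≠ 0 := right_ne_zero_of_mul (hs ▸ hs0)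
  have hscalar : (m + r * u) * s⁻¹ = k⁻¹ := by
    rw [hs, mul_inv_rev, mul_inv_cancel_left₀ hmru]
  rw [smul_smul, ← add_smul, mul_right_comm, ← add_mul, hscalar]

theorem threshold_signature_completeness
    (q : ℕ) [Fact q.Prime]
    (G : Type*) [AddCommGroup G] [Module (ZMod q) G]
    (B : G) (m r kA kB σA σB u : ZMod q)
    (hσ : σA + σB = (kA + kB) * u)
    (k : ZMod q) (hk : k = kA + kB)
    (Y : G) (hY : Y = u • B)
    (sA sB : ZMod q) (hsA : sA = m * kA + r * σA) (hsB : sB = m * kB + r * σB)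
    (s : ZMod q) (hs : s = sA + sB) :
    s = k * (m + r * u) ∧
      (k ≠ 0 → s ≠ 0 → (m * s⁻¹) • B + (r * s⁻¹) • Y = k⁻¹ • B) := by
  have hs_eq : s = k * (m + r * u) := by
    rw [hs, hsA, hsB, hk]
    exact sum_signature_shards_eq hσ
  refine ⟨hs_eq, fun _ hs0 => ?_⟩
  rw [hY]
  exact ecdsa_verify_of_eq_mul B hs_eq hs0
end

section
/- The signature consistency check passes in honest executions: let q be a prime, G an additive commutative group that is a module over ZMod q, and B, Y, R : G. Let m, r, s₁, s₂, l₁, l₂, ρ₁, ρ₂ ∈ ZMod q and suppose (s₁ + s₂)•R = m•B + r•Y. Define W_i = s_i•R + l_i•B, Z_i = ρ_i•B for i = 1,2, W = −(m•B) − r•Y + W₁ + W₂, Z = Z₁ + Z₂, U_i = ρ_i•W and T_i = l_i•Z. Then T₁ + T₂ = U₁ + U₂. -/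
/-!
For a correct signature the unmasked part of `W` cancels, leaving `W = (l₁ + l₂) • B`, while
`Z = (ρ₁ + ρ₂) • B`. Hence both `T₁ + T₂` and `U₁ + U₂` equal `(l₁ + l₂)(ρ₁ + ρ₂) • B`, by
commutativity of the scalars.
-/

section

variable {S M : Type*} [CommRing S] [AddCommGroup M] [Module S M]

theorem neg_sub_add_add_eq_smul_of_add_smul_eq {B Y R : M} {m r s₁ s₂ l₁ l₂ : S}
    (h : (s₁ + s₂) • R = m • B + r • Y) :
    -(m • B) - r • Y + (s₁ • R + l₁ • B) + (s₂ • R + l₂ • B) = (l₁ + l₂) • B := by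
  linear_combination (norm := module) h

end

theorem signature_check_passes_general
    (q : ℕ)
    (G : Type*) [AddCommGroup G] [Module (ZMod q) G]
    (B Y R : G)
    (m r s₁ s₂ l₁ l₂ ρ₁ ρ₂ : ZMod q)
    (hcorrect : (s₁ + s₂) • R = m • B + r • Y)
    (W₁ W₂ Z₁ Z₂ : G)
    (hW₁ : W₁ = s₁ • R + l₁ • B) (hW₂ : W₂ = s₂ • R + l₂ • B)
    (hZ₁ : Z₁ = ρ₁ • B) (hZ₂ : Z₂ = ρ₂ • B)
    (W Z : G)
    (hW : W = -(m • B) - r • Y + W₁ + W₂) (hZ : Z = Z₁ + Z₂)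
    (U₁ U₂ T₁ T₂ : G)
    (hU₁ : U₁ = ρ₁ • W) (hU₂ : U₂ = ρ₂ • W)
    (hT₁ : T₁ = l₁ • Z) (hT₂ : T₂ = l₂ • Z) :
    T₁ + T₂ = U₁ + U₂ := by
  have hW_eq : W = (l₁ + l₂) • B := by
    rw [hW, hW₁, hW₂]
    exact neg_sub_add_add_eq_smul_of_add_smul_eq hcorrect
  subst hT₁ hT₂ hU₁ hU₂ hZ hZ₁ hZ₂ hW_eq
  module

theorem signature_check_passes
    (q : ℕ) [Fact q.Prime]
    (G : Type*) [AddCommGroup G] [Module (ZMod q) G]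
    (B Y R : G)
    (m r s₁ s₂ l₁ l₂ ρ₁ ρ₂ : ZMod q)
    (hcorrect : (s₁ + s₂) • R = m • B + r • Y)
    (W₁ W₂ Z₁ Z₂ : G)
    (hW₁ : W₁ = s₁ • R + l₁ • B) (hW₂ : W₂ = s₂ • R + l₂ • B)
    (hZ₁ : Z₁ = ρ₁ • B) (hZ₂ : Z₂ = ρ₂ • B)
    (W Z : G)
    (hW : W = -(m • B) - r • Y + W₁ + W₂) (hZ : Z = Z₁ + Z₂)
    (U₁ U₂ T₁ T₂ : G)
    (hU₁ : U₁ = ρ₁ • W) (hU₂ : U₂ = ρ₂ • W)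
    (hT₁ : T₁ = l₁ • Z) (hT₂ : T₂ = l₂ • Z) :
    T₁ + T₂ = U₁ + U₂ :=
  signature_check_passes_general q G B Y R m r s₁ s₂ l₁ l₂ ρ₁ ρ₂ hcorrect W₁ W₂ Z₁ Z₂ hW₁ hW₂ hZ₁
    hZ₂ W Z hW hZ U₁ U₂ T₁ T₂ hU₁ hU₂ hT₁ hT₂
end
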